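/- Let G ≤ Homeo₊(S¹) be such that every non-identity element of G has no fixed point on the circle. If f, g ∈ G have equal rotation numbers, then f = g. Consequently G is abelian. -/

import Mathlib

/-- The circle `S¹ = ℝ/ℤ`. -/
abbrev S1 := AddCircle (1 : ℝ)

/-- `F : ℝ → ℝ` is a lift of `f` through the covering `ℝ → ℝ/ℤ`, witnessing that `f`
is an orientation-preserving homeomorphism of the circle. -/
def IsLiftOf (f : Equiv.Perm S1) (F : ℝ → ℝ) : Prop :=
  StrictMono F ∧ Continuous F ∧ (∀ x : ℝ, F (x + 1) = F x + 1) ∧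
    ∀ x : ℝ, f ((x : ℝ) : S1) = ((F x : ℝ) : S1)

/-- `f` is an orientation-preserving homeomorphism of the circle. -/
def IsPosHomeo (f : Equiv.Perm S1) : Prop := ∃ F, IsLiftOf f F

/-- `ρ` is the translation number of the lift `F`. -/
def HasRotLim (F : ℝ → ℝ) (ρ : ℝ) : Prop :=
  Filter.Tendsto (fun n : ℕ => F^[n] 0 / n) Filter.atTop (nhds ρ)

/-- `G` contains a non-abelian free subgroup (one isomorphic to the free group of rank 2). -/
def HasFreeSubgroup (G : Subgroup (Equiv.Perm S1)) : Prop :=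
  ∃ φ : FreeGroup (Fin 2) →* Equiv.Perm S1, Function.Injective φ ∧ ∀ w, φ w ∈ G

/-!
Lift `G` to the group `Ĝ` of all degree-one lifts of its elements. Since non-trivial elements of
`G` have no fixed point, two elements of `Ĝ` that agree at one point are equal (uniqueness of
lifts through the covering `ℝ → S¹`), so by the intermediate value theorem any two distinct
elements of `Ĝ` are strictly ordered everywhere. This pointwise order is a bi-invariant,
Archimedean linear order on `Ĝ`, so `Ĝ` is abelian by Hölder's theorem, and so is `G`.
On commuting lifts the translation number is additive; as an element of `Ĝ` moving every point
to the right has positive translation number, the translation number is strictly monotone, hence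
injective, on `Ĝ`. Lifts of `f` and `g` whose rotation numbers differ by `m ∈ ℤ` thus coincide
after composing one of them with the translation by `m`, and then `f = g`.
-/

open scoped commutatorElement

section Holder

variable {Γ : Type*} [Group Γ] [LinearOrder Γ] [MulLeftMono Γ]

lemma zpow_right_strictMono_of_one_lt {b : Γ} (hb : 1 < b) : StrictMono fun n : ℤ ↦ b ^ n :=
  strictMono_int_of_lt_succ fun n ↦ by rw [zpow_add_one]; exact lt_mul_of_one_lt_right' _ hb

variable [MulRightMono Γ]

lemma exists_zpow_le_lt_zpow_add_one (harch : ∀ a b : Γ, 1 < b → ∃ n : ℕ, a < b ^ n)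
    {b : Γ} (hb : 1 < b) (a : Γ) : ∃ m : ℤ, b ^ m ≤ a ∧ a < b ^ (m + 1) := by
  obtain ⟨N, hN⟩ := harch a b hb
  obtain ⟨M, hM⟩ := harch a⁻¹ b hb
  have hbdd : ∀ m : ℤ, b ^ m ≤ a → m < N := fun m hm =>
    (zpow_right_strictMono_of_one_lt hb).lt_iff_lt.mp (hm.trans_lt (by simpa using hN))
  have hne : b ^ (-(M : ℤ)) ≤ a := by
    rw [zpow_neg, zpow_natCast]
    exact (inv_lt_of_inv_lt' hM).le
  obtain ⟨m, hm, hmax⟩ := Int.exists_greatest_of_bdd ⟨N, fun m hm => (hbdd m hm).le⟩ ⟨_, hne⟩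
  exact ⟨m, hm, lt_of_not_ge fun h => (lt_add_one m).not_ge (hmax _ h)⟩

lemma commutatorElement_lt_sq (harch : ∀ a b : Γ, 1 < b → ∃ n : ℕ, a < b ^ n)
    {c : Γ} (hc : 1 < c) (a b : Γ) : ⁅a, b⁆ < c ^ 2 := by
  obtain ⟨m, ham, hma⟩ := exists_zpow_le_lt_zpow_add_one harch hc a
  obtain ⟨n, hbn, hnb⟩ := exists_zpow_le_lt_zpow_add_one harch hc b
  calc ⁅a, b⁆ = a * b * a⁻¹ * b⁻¹ := commutatorElement_def a b
    _ < c ^ (m + 1) * c ^ (n + 1) * c ^ (-m) * c ^ (-n) := by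
      refine mul_lt_mul_of_lt_of_le (mul_lt_mul_of_lt_of_le (Left.mul_lt_mul hma hnb) ?_) ?_
      · rw [zpow_neg]; exact inv_le_inv_iff.mpr ham
      · rw [zpow_neg]; exact inv_le_inv_iff.mpr hbn
    _ = c ^ 2 := by group

/-- Hölder's theorem. -/
theorem commute_of_forall_lt_pow (harch : ∀ a b : Γ, 1 < b → ∃ n : ℕ, a < b ^ n) (a b : Γ) :
    Commute a b := by
  by_contra hab
  wlog he : 1 < ⁅a, b⁆ generalizing a b
  · refine this b a (fun h => hab h.symm) ?_
    rw [← commutatorElement_inv]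
    refine one_lt_inv'.mpr (lt_of_le_of_ne (not_lt.mp he) ?_)
    exact fun h => hab (commutatorElement_eq_one_iff_commute.mp h)
  set e := ⁅a, b⁆
  -- Either some `1 < c < e` gives an `f > 1` with `f ^ 2 ≤ e`, contradicting
  -- `commutatorElement_lt_sq`, or `e` is the least element above `1` and generates `Γ`.
  by_cases hmin : ∃ c, 1 < c ∧ c < e
  · obtain ⟨c, hc, hce⟩ := hmin
    have hc' : 1 < c⁻¹ * e := by simpa using hce
    rcases le_or_gt c (c⁻¹ * e) with h | h
    · have : c ^ 2 ≤ e :=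
        calc c ^ 2 = c * c := sq c
          _ ≤ c * (c⁻¹ * e) := mul_le_mul_right h c
          _ = e := mul_inv_cancel_left c e
      exact (commutatorElement_lt_sq harch hc a b).not_ge this
    · have : (c⁻¹ * e) ^ 2 ≤ e :=
        calc (c⁻¹ * e) ^ 2 = (c⁻¹ * e) * (c⁻¹ * e) := sq _
          _ ≤ c * (c⁻¹ * e) := mul_le_mul_left h.le _
          _ = e := mul_inv_cancel_left c e
      exact (commutatorElement_lt_sq harch hc' a b).not_ge this
  · have hpow : ∀ x : Γ, ∃ m : ℤ, x = e ^ m := by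
      intro x
      obtain ⟨m, hmx, hxm⟩ := exists_zpow_le_lt_zpow_add_one harch he x
      have h1 : 1 ≤ (e ^ m)⁻¹ * x := le_inv_mul_iff_mul_le.mpr (by simpa using hmx)
      have h2 : (e ^ m)⁻¹ * x < e := inv_mul_lt_iff_lt_mul.mpr (by rwa [← zpow_add_one])
      have h3 : (e ^ m)⁻¹ * x = 1 := le_antisymm (not_lt.mp fun h => hmin ⟨_, h, h2⟩) h1
      exact ⟨m, (inv_mul_eq_one.mp h3).symm⟩
    obtain ⟨m, hm⟩ := hpow a
    obtain ⟨n, hn⟩ := hpow b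
    exact hab (hm ▸ hn ▸ Commute.zpow_zpow_self e m n)

end Holder

namespace IsLiftOf

variable {f g : Equiv.Perm S1} {F H : ℝ → ℝ}

lemma perm_eq (hf : IsLiftOf f F) (hg : IsLiftOf g F) : f = g := by
  ext y
  obtain ⟨x, rfl⟩ := QuotientAddGroup.mk_surjective y
  exact (hf.2.2.2 x).trans (hg.2.2.2 x).symm

lemma one : IsLiftOf 1 id :=
  ⟨strictMono_id, continuous_id, fun _ => rfl, fun _ => rfl⟩

lemma mul (hf : IsLiftOf f F) (hg : IsLiftOf g H) : IsLiftOf (f * g) (F ∘ H) :=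
  ⟨hf.1.comp hg.1, hf.2.1.comp hg.2.1, fun x => by simp [hg.2.2.1, hf.2.2.1],
    fun x => by simp [hg.2.2.2, hf.2.2.2]⟩

lemma commute (hf : IsLiftOf f F) (hg : IsLiftOf g H) (h : F ∘ H = H ∘ F) : f * g = g * f :=
  (hf.mul hg).perm_eq (h ▸ hg.mul hf)

lemma exists_units_coe_eq (hf : IsLiftOf f F) : ∃ K : CircleDeg1Liftˣ, ⇑K = F := by
  let K : CircleDeg1Lift := ⟨⟨F, hf.1.monotone⟩, hf.2.2.1⟩
  have hK : IsUnit K := CircleDeg1Lift.isUnit_iff_bijective.mpr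
    ⟨hf.1.injective, K.continuous_iff_surjective.mp hf.2.1⟩
  exact ⟨hK.unit, rfl⟩

end IsLiftOf

namespace CircleDeg1Lift

lemma continuous_units (K : CircleDeg1Liftˣ) : Continuous K :=
  (toOrderIso K).continuous

lemma isLiftOf_units_iff (K : CircleDeg1Liftˣ) (g : Equiv.Perm S1) :
    IsLiftOf g K ↔ ∀ x : ℝ, g x = K x :=
  ⟨fun h => h.2.2.2, fun h => ⟨(toOrderIso K).strictMono, continuous_units K,
    (K : CircleDeg1Lift).map_add_one, h⟩⟩

lemma isLiftOf_translate_int (m : ℤ) : IsLiftOf 1 (translate (Multiplicative.ofAdd (m : ℝ))) :=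
  (isLiftOf_units_iff _ _).mpr fun x => by simp [translate_apply]

lemma translationNumber_translate_int_mul (K : CircleDeg1Lift) (m : ℤ) :
    (↑(translate (Multiplicative.ofAdd (m : ℝ))) * K).translationNumber =
      m + K.translationNumber := by
  rw [translationNumber_mul_of_commute, translationNumber_translate]
  exact (commute_iff_commute.mpr fun x => by simp [translate_apply, K.map_int_add]).symm

end CircleDeg1Lift

lemma IsLiftOf.units_inv {g : Equiv.Perm S1} {K : CircleDeg1Liftˣ} (h : IsLiftOf g K) :
    IsLiftOf g⁻¹ ⇑K⁻¹ := by
  refine (CircleDeg1Lift.isLiftOf_units_iff _ _).mpr fun x => ?_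
  rw [Equiv.Perm.inv_eq_iff_eq, h.2.2.2, CircleDeg1Lift.units_apply_inv_apply]

lemma HasRotLim.translationNumber_eq {K : CircleDeg1Lift} {ρ : ℝ} (h : HasRotLim K ρ) :
    K.translationNumber = ρ :=
  tendsto_nhds_unique (by simpa only [CircleDeg1Lift.coe_pow] using K.tendsto_translation_number₀) h

def liftGroup (G : Subgroup (Equiv.Perm S1)) : Subgroup CircleDeg1Liftˣ where
  carrier := {K | ∃ g ∈ G, IsLiftOf g K}
  mul_mem' := fun ⟨f, hf, hF⟩ ⟨g, hg, hG⟩ => ⟨f * g, G.mul_mem hf hg, hF.mul hG⟩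
  one_mem' := ⟨1, G.one_mem, IsLiftOf.one⟩
  inv_mem' := fun ⟨g, hg, hK⟩ => ⟨g⁻¹, G.inv_mem hg, hK.units_inv⟩

def ActsFreely (G : Subgroup (Equiv.Perm S1)) : Prop :=
  ∀ g ∈ G, g ≠ 1 → ∀ x : S1, g x ≠ x

namespace liftGroup

variable {G : Subgroup (Equiv.Perm S1)} {K L : CircleDeg1Liftˣ}

lemma eq_of_apply_eq (hG : ActsFreely G) (hK : K ∈ liftGroup G) (hL : L ∈ liftGroup G) {x : ℝ}
    (h : K x = L x) : K = L := by
  obtain ⟨f, hf, hfK⟩ := hK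
  obtain ⟨g, hg, hgL⟩ := hL
  have hfg : f = g := by
    by_contra hne
    refine hG (g⁻¹ * f) (G.mul_mem (G.inv_mem hg) hf) (fun h => hne (inv_mul_eq_one.mp h).symm)
      x ?_
    rw [Equiv.Perm.mul_apply, hfK.2.2.2, h, ← hgL.2.2.2, Equiv.Perm.coe_inv,
      Equiv.symm_apply_apply]
  have hcomp : ((↑) : ℝ → S1) ∘ K = (↑) ∘ L := by
    funext y
    simp only [Function.comp_apply, ← hfK.2.2.2, ← hgL.2.2.2, hfg]
  have := (AddCircle.isCoveringMap_coe (1 : ℝ)).eq_of_comp_eq hfK.2.1 hgL.2.1 hcomp x h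
  exact Units.ext (CircleDeg1Lift.ext (congrFun this))

lemma lt_of_apply_lt (hG : ActsFreely G) (hK : K ∈ liftGroup G) (hL : L ∈ liftGroup G) {x : ℝ}
    (h : K x < L x) (y : ℝ) : K y < L y := by
  by_contra! hy
  have hcont : Continuous fun t => L t - K t :=
    (CircleDeg1Lift.continuous_units L).sub (CircleDeg1Lift.continuous_units K)
  obtain ⟨z, hz⟩ : ∃ z, L z - K z = 0 :=
    intermediate_value_univ y x hcont ⟨by linarith, by linarith⟩
  rw [eq_of_apply_eq hG hK hL (x := z) (by linarith)] at h
  exact lt_irrefl _ h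

lemma le_of_apply_le (hG : ActsFreely G) (hK : K ∈ liftGroup G) (hL : L ∈ liftGroup G) {x : ℝ}
    (h : K x ≤ L x) (y : ℝ) : K y ≤ L y := by
  rcases h.lt_or_eq with h | h
  · exact (lt_of_apply_lt hG hK hL h y).le
  · rw [eq_of_apply_eq hG hK hL h]

lemma lt_iff_apply_lt (hG : ActsFreely G) {K L : liftGroup G} (x : ℝ) :
    K < L ↔ (K : CircleDeg1Liftˣ) x < (L : CircleDeg1Liftˣ) x := by
  refine ⟨fun h => ?_, fun h => lt_of_le_of_ne (fun y => (lt_of_apply_lt hG K.2 L.2 h y).le) ?_⟩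
  · exact lt_of_le_of_ne (h.le x) fun hx => h.ne (Subtype.ext (eq_of_apply_eq hG K.2 L.2 hx))
  · rintro rfl
    exact lt_irrefl _ h

/-- Extends the pointwise order of `CircleDeg1Lift`. -/
noncomputable abbrev linearOrder (hG : ActsFreely G) : LinearOrder (liftGroup G) where
  le_total K L := (le_total ((K : CircleDeg1Liftˣ) 0) ((L : CircleDeg1Liftˣ) 0)).imp
    (le_of_apply_le hG K.2 L.2) (le_of_apply_le hG L.2 K.2)
  toDecidableLE := Classical.decRel _

lemma commute (hG : ActsFreely G) (K L : liftGroup G) : Commute K L := by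
  let _ := linearOrder hG
  have : MulLeftMono (liftGroup G) := ⟨fun M K L h x => (M : CircleDeg1Liftˣ).val.monotone (h x)⟩
  have : MulRightMono (liftGroup G) := ⟨fun M K L h x => h _⟩
  refine commute_of_forall_lt_pow (fun A B hB => ?_) K L
  set τ := ((B : CircleDeg1Liftˣ) : CircleDeg1Lift).translationNumber
  have hτ : 0 < τ := CircleDeg1Lift.lt_translationNumber_of_forall_add_lt _
    (CircleDeg1Lift.continuous_units B) (z := 0) fun x => by
      simpa using (lt_iff_apply_lt hG x).mp hB
  obtain ⟨n, hn⟩ := exists_nat_gt (((A : CircleDeg1Liftˣ) 0 + 1) / τ)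
  refine ⟨n, (lt_iff_apply_lt hG 0).mpr ?_⟩
  have hdist :=
    ((B : CircleDeg1Liftˣ) : CircleDeg1Lift).dist_pow_map_zero_mul_translationNumber_le n
  rw [Real.dist_eq, abs_le] at hdist
  rw [div_lt_iff₀ hτ] at hn
  push_cast
  linarith

lemma commute_coe (hG : ActsFreely G) (hK : K ∈ liftGroup G) (hL : L ∈ liftGroup G) :
    Commute (K : CircleDeg1Lift) L :=
  ((commute hG ⟨K, hK⟩ ⟨L, hL⟩).map (liftGroup G).subtype).map (Units.coeHom _)

lemma translationNumber_lt_of_apply_lt (hG : ActsFreely G) (hK : K ∈ liftGroup G)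
    (hL : L ∈ liftGroup G) {x : ℝ} (h : K x < L x) :
    (K : CircleDeg1Lift).translationNumber < (L : CircleDeg1Lift).translationNumber := by
  have hD : L * K⁻¹ ∈ liftGroup G := (liftGroup G).mul_mem hL ((liftGroup G).inv_mem hK)
  have hD_pos : 0 < ((L * K⁻¹ : CircleDeg1Liftˣ) : CircleDeg1Lift).translationNumber := by
    refine CircleDeg1Lift.lt_translationNumber_of_forall_add_lt _
      (CircleDeg1Lift.continuous_units _) (z := 0) fun y => ?_
    simpa using lt_of_apply_lt hG hK hL h (K⁻¹ y)
  have hsplit : (L : CircleDeg1Lift) = ((L * K⁻¹ : CircleDeg1Liftˣ) : CircleDeg1Lift) * K := by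
    simp
  rw [hsplit, CircleDeg1Lift.translationNumber_mul_of_commute (commute_coe hG hD hK)]
  linarith

lemma eq_of_translationNumber_eq (hG : ActsFreely G) (hK : K ∈ liftGroup G)
    (hL : L ∈ liftGroup G)
    (h : (K : CircleDeg1Lift).translationNumber = (L : CircleDeg1Lift).translationNumber) :
    K = L := by
  rcases lt_trichotomy (K 0) (L 0) with hlt | heq | hgt
  · exact absurd h (translationNumber_lt_of_apply_lt hG hK hL hlt).ne
  · exact eq_of_apply_eq hG hK hL heq
  · exact absurd h (translationNumber_lt_of_apply_lt hG hL hK hgt).ne'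

end liftGroup

theorem stmt8 (G : Subgroup (Equiv.Perm S1)) (hpos : ∀ g ∈ G, IsPosHomeo g)
    (hnofix : ∀ g ∈ G, g ≠ 1 → ∀ x : S1, g x ≠ x) :
    (∀ f ∈ G, ∀ g ∈ G, ∀ F H : ℝ → ℝ, ∀ ρ₁ ρ₂ : ℝ,
        IsLiftOf f F → IsLiftOf g H → HasRotLim F ρ₁ → HasRotLim H ρ₂ →
        (∃ m : ℤ, ρ₁ = ρ₂ + m) → f = g) ∧
      ∀ a ∈ G, ∀ b ∈ G, a * b = b * a := by
  constructor
  · rintro f hf g hg F H ρ₁ ρ₂ hF hH hρ₁ hρ₂ ⟨m, rfl⟩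
    obtain ⟨K, rfl⟩ := hF.exists_units_coe_eq
    obtain ⟨L, rfl⟩ := hH.exists_units_coe_eq
    set T := CircleDeg1Lift.translate (Multiplicative.ofAdd (m : ℝ))
    have hTL : IsLiftOf g ⇑(T * L) := by
      simpa using (CircleDeg1Lift.isLiftOf_translate_int m).mul hH
    have hτ : (K : CircleDeg1Lift).translationNumber =
        ((T * L : CircleDeg1Liftˣ) : CircleDeg1Lift).translationNumber := by
      rw [Units.val_mul, CircleDeg1Lift.translationNumber_translate_int_mul,
        hρ₁.translationNumber_eq, hρ₂.translationNumber_eq, add_comm]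
    have hKTL := liftGroup.eq_of_translationNumber_eq hnofix ⟨f, hf, hF⟩ ⟨g, hg, hTL⟩ hτ
    exact hF.perm_eq (hKTL ▸ hTL)
  · intro a ha b hb
    obtain ⟨_, hA⟩ := hpos a ha
    obtain ⟨_, hB⟩ := hpos b hb
    obtain ⟨K, rfl⟩ := hA.exists_units_coe_eq
    obtain ⟨L, rfl⟩ := hB.exists_units_coe_eq
    exact hA.commute hB
      (congrArg DFunLike.coe (liftGroup.commute_coe hnofix ⟨a, ha, hA⟩ ⟨b, hb, hB⟩).eq)
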